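/- If p = p(n) satisfies p(n)·n^{8/15} → 0 as n → ∞, then asymptotically almost surely every triangle collection C contained as a subgraph in the random graph G ~ G_{n,p} satisfies m(C) < 15/8. -/

import Mathlib

namespace TournamentGame

variable {V : Type*} [DecidableEq V]

/-- The underlying undirected edges of a set of oriented edges. -/
def undirect (M : Finset (V × V)) : Finset (Sym2 V) :=
  M.image fun p => s(p.1, p.2)

/-- `MakerWin X F b M B` : in the (1:b) Maker-Breaker game on board `X`, with Maker
having claimed `M`, Breaker having claimed `B`, and Maker to move, Maker has a strategy
to claim all edges of some winning set (i.e. reach a position with `F` on her edges). -/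
inductive MakerWin (X : Finset (Sym2 V)) (F : Finset (Sym2 V) → Prop) (b : ℕ) :
    Finset (Sym2 V) → Finset (Sym2 V) → Prop
  | win (M B : Finset (Sym2 V)) : F M → MakerWin X F b M B
  | move (M B : Finset (Sym2 V)) (e : Sym2 V) (heX : e ∈ X) (hefree : e ∉ M ∪ B)
      (h : ∀ B' : Finset (Sym2 V), B' ⊆ X \ (insert e M ∪ B) →
        B'.card = min b (X \ (insert e M ∪ B)).card →
        MakerWin X F b (insert e M) (B ∪ B')) :
      MakerWin X F b M B

/-- `BreakerBlock X F b M B` : Maker to move; Breaker has a strategy ensuring that `F`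
never holds on Maker's edge set. -/
inductive BreakerBlock (X : Finset (Sym2 V)) (F : Finset (Sym2 V) → Prop) (b : ℕ) :
    Finset (Sym2 V) → Finset (Sym2 V) → Prop
  | step (M B : Finset (Sym2 V)) (hF : ¬ F M) (resp : Sym2 V → Finset (Sym2 V))
      (hsub : ∀ e ∈ X, e ∉ M ∪ B → resp e ⊆ X \ (insert e M ∪ B))
      (hcard : ∀ e ∈ X, e ∉ M ∪ B → (resp e).card = min b (X \ (insert e M ∪ B)).card)
      (h : ∀ e ∈ X, e ∉ M ∪ B → BreakerBlock X F b (insert e M) (B ∪ resp e)) :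
      BreakerBlock X F b M B

/-- Oriented (tournament-game) version of `MakerWin`: Maker claims an edge together with
an orientation; her position is a set of oriented edges. -/
inductive OMakerWin (X : Finset (Sym2 V)) (F : Finset (V × V) → Prop) (b : ℕ) :
    Finset (V × V) → Finset (Sym2 V) → Prop
  | win (M : Finset (V × V)) (B : Finset (Sym2 V)) : F M → OMakerWin X F b M B
  | move (M : Finset (V × V)) (B : Finset (Sym2 V)) (x y : V)
      (heX : s(x, y) ∈ X) (hefree : s(x, y) ∉ undirect M ∪ B)
      (h : ∀ B' : Finset (Sym2 V), B' ⊆ X \ (insert s(x, y) (undirect M) ∪ B) →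
        B'.card = min b (X \ (insert s(x, y) (undirect M) ∪ B)).card →
        OMakerWin X F b (insert (x, y) M) (B ∪ B')) :
      OMakerWin X F b M B

/-- Oriented version of `BreakerBlock`. -/
inductive OBreakerBlock (X : Finset (Sym2 V)) (F : Finset (V × V) → Prop) (b : ℕ) :
    Finset (V × V) → Finset (Sym2 V) → Prop
  | step (M : Finset (V × V)) (B : Finset (Sym2 V)) (hF : ¬ F M)
      (resp : V → V → Finset (Sym2 V))
      (hsub : ∀ x y : V, s(x, y) ∈ X → s(x, y) ∉ undirect M ∪ B →
        resp x y ⊆ X \ (insert s(x, y) (undirect M) ∪ B))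
      (hcard : ∀ x y : V, s(x, y) ∈ X → s(x, y) ∉ undirect M ∪ B →
        (resp x y).card = min b (X \ (insert s(x, y) (undirect M) ∪ B)).card)
      (h : ∀ x y : V, s(x, y) ∈ X → s(x, y) ∉ undirect M ∪ B →
        OBreakerBlock X F b (insert (x, y) M) (B ∪ resp x y)) :
      OBreakerBlock X F b M B

/-- Position with Breaker to move, in the unoriented game: Breaker can respond and
then keep blocking forever. -/
def BreakerTurn (X : Finset (Sym2 V)) (F : Finset (Sym2 V) → Prop) (b : ℕ)
    (M B : Finset (Sym2 V)) : Prop :=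
  ¬ F M ∧ ∃ B' : Finset (Sym2 V), B' ⊆ X \ (M ∪ B) ∧
    B'.card = min b (X \ (M ∪ B)).card ∧ BreakerBlock X F b M (B ∪ B')

/-- Position with Breaker to move, in the oriented game. -/
def OBreakerTurn (X : Finset (Sym2 V)) (F : Finset (V × V) → Prop) (b : ℕ)
    (M : Finset (V × V)) (B : Finset (Sym2 V)) : Prop :=
  ¬ F M ∧ ∃ B' : Finset (Sym2 V), B' ⊆ X \ (undirect M ∪ B) ∧
    B'.card = min b (X \ (undirect M ∪ B)).card ∧ OBreakerBlock X F b M (B ∪ B')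

/-- Winning sets of the triangle game. -/
def HasTriangle (M : Finset (Sym2 V)) : Prop :=
  ∃ x y z : V, x ≠ y ∧ y ≠ z ∧ x ≠ z ∧ s(x, y) ∈ M ∧ s(y, z) ∈ M ∧ s(x, z) ∈ M

/-- Maker's oriented edges contain a cyclic (directed) triangle. -/
def HasCyclicTriangle (M : Finset (V × V)) : Prop :=
  ∃ x y z : V, x ≠ y ∧ y ≠ z ∧ x ≠ z ∧ (x, y) ∈ M ∧ (y, z) ∈ M ∧ (z, x) ∈ M

/-- Maker's oriented edges contain an acyclic (transitive) triangle. -/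
def HasAcyclicTriangle (M : Finset (V × V)) : Prop :=
  ∃ x y z : V, x ≠ y ∧ y ≠ z ∧ x ≠ z ∧ (x, y) ∈ M ∧ (y, z) ∈ M ∧ (x, z) ∈ M

/-- A tournament on `Fin k`, given by its arc relation. -/
def IsTournament {k : ℕ} (T : Fin k → Fin k → Prop) : Prop :=
  (∀ i, ¬ T i i) ∧ ∀ i j : Fin k, i ≠ j → (T i j ↔ ¬ T j i)

/-- Maker's oriented edges contain a copy of the tournament `T`. -/
def HasTCopy {k : ℕ} (T : Fin k → Fin k → Prop) (M : Finset (V × V)) : Prop :=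
  ∃ f : Fin k → V, Function.Injective f ∧ ∀ i j : Fin k, T i j → (f i, f j) ∈ M

/-- The edge set of the complete graph `K_n`. -/
def completeEdges (n : ℕ) : Finset (Sym2 (Fin n)) :=
  Finset.univ.filter fun e => ¬ e.IsDiag

/-- The edge set of the Turán graph `T_{n,k}` : classes are residues mod `k`. -/
def turanEdges (n k : ℕ) : Finset (Sym2 (Fin n)) :=
  Finset.univ.filter fun e => ¬ (e.map fun v : Fin n => v.val % k).IsDiag

/-- `A` contains a good copy of `K_k` (all vertices in distinct classes of `T_{n,k}`). -/
def GoodCopy (n k : ℕ) (A : Finset (Sym2 (Fin n))) : Prop :=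
  ∃ f : Fin k → Fin n, Function.Injective f ∧
    (∀ i j : Fin k, i ≠ j → (f i).val % k ≠ (f j).val % k) ∧
    (∀ i j : Fin k, i ≠ j → s(f i, f j) ∈ A)

open Classical in
/-- Probability that a `p`-random subset `A` of `E` (each element kept independently with
probability `p`) satisfies `P`. This is the model `G(E, p)`. -/
noncomputable def edgeProb {α : Type*} [DecidableEq α] (E : Finset α) (p : ℝ)
    (P : Finset α → Prop) : ℝ :=
  ∑ A ∈ E.powerset, if P A then p ^ A.card * (1 - p) ^ (E.card - A.card) else 0

open Classical in
/-- Probability that a uniformly random `M`-element subset of `E` satisfies `P`.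
This is the model `G(E, M)`. -/
noncomputable def uniformProb {α : Type*} [DecidableEq α] (E : Finset α) (M : ℕ)
    (P : Finset α → Prop) : ℝ :=
  ((E.powerset.filter fun A => A.card = M ∧ P A).card : ℝ) /
    ((E.powerset.filter fun A => A.card = M).card : ℝ)

/-- The three edges of a triangle on `x`, `y`, `z`. -/
def triEdges (x y z : V) : Finset (Sym2 V) := {s(x, y), s(y, z), s(x, z)}

/-- `x`, `y`, `z` form a triangle of the graph with edge set `A`. -/
def IsTriangleIn (A : Finset (Sym2 V)) (x y z : V) : Prop :=
  x ≠ y ∧ y ≠ z ∧ x ≠ z ∧ s(x, y) ∈ A ∧ s(y, z) ∈ A ∧ s(x, z) ∈ A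

/-- The triangles of `A`, each recorded as its set of three edges: the vertex set of `T_A`. -/
def TriSets (A : Finset (Sym2 V)) : Set (Finset (Sym2 V)) :=
  {t | ∃ x y z : V, IsTriangleIn A x y z ∧ t = triEdges x y z}

/-- `C` is a triangle collection: every edge lies in a triangle and the graph `T_C` of
triangles (adjacent iff sharing an edge) is connected. -/
def IsTriangleCollection (C : Finset (Sym2 V)) : Prop :=
  (∀ e ∈ C, ∃ x y z : V, IsTriangleIn C x y z ∧ e ∈ triEdges x y z) ∧
  ∀ t ∈ TriSets C, ∀ t' ∈ TriSets C,
    Relation.ReflTransGen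
      (fun a b => a ∈ TriSets C ∧ b ∈ TriSets C ∧ (a ∩ b).Nonempty) t t'

/-- Adjacency of `K₃⁺`: a triangle on `{0,1,2}` with a pendant edge `{2,3}`. -/
def K3plusAdj (a b : Fin 4) : Prop :=
  (a.val < 3 ∧ b.val < 3 ∧ a ≠ b) ∨ (a.val = 2 ∧ b.val = 3) ∨ (a.val = 3 ∧ b.val = 2)

/-- Adjacency of the path on `Fin m`. -/
def pathAdj {m : ℕ} (a b : Fin m) : Prop := a.val + 1 = b.val ∨ b.val + 1 = a.val

/-- `C` is very basic: `T_C` is (isomorphic to) a subgraph of `K₃⁺` or of a path `P_m`. -/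
def VeryBasic (C : Finset (Sym2 V)) : Prop :=
  (∃ φ : TriSets C → Fin 4, Function.Injective φ ∧
    ∀ t t' : TriSets C, t ≠ t' → ((t : Finset (Sym2 V)) ∩ (t' : Finset (Sym2 V))).Nonempty →
      K3plusAdj (φ t) (φ t')) ∨
  (∃ m : ℕ, ∃ φ : TriSets C → Fin m, Function.Injective φ ∧
    ∀ t t' : TriSets C, t ≠ t' → ((t : Finset (Sym2 V)) ∩ (t' : Finset (Sym2 V))).Nonempty →
      pathAdj (φ t) (φ t'))

/-- `C` is basic: there are distinct edges `e₁, e₂` with `C - eᵢ` very basic for both. -/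
def Basic (C : Finset (Sym2 V)) : Prop :=
  ∃ e₁ ∈ C, ∃ e₂ ∈ C, e₁ ≠ e₂ ∧ VeryBasic (C.erase e₁) ∧ VeryBasic (C.erase e₂)

open Classical in
/-- The set of non-isolated vertices of the graph with edge set `C`. -/
noncomputable def support [Fintype V] (C : Finset (Sym2 V)) : Finset V :=
  Finset.univ.filter fun v => ∃ e ∈ C, v ∈ e

open Classical in
/-- Degree of `v` in the graph with edge set `C`. -/
noncomputable def degreeIn (C : Finset (Sym2 V)) (v : V) : ℕ :=
  (C.filter fun e => v ∈ e).card

/-- The maximum density `m(C) = max_{H ⊆ C} e(H)/v(H)` is (strictly) less than `r`. -/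
def MaxDensityLt [Fintype V] (C : Finset (Sym2 V)) (r : ℝ) : Prop :=
  ∀ D ⊆ C, D.Nonempty → (D.card : ℝ) / ((support D).card : ℝ) < r

/-- The edge set of the `k`-wheel: a cycle on `{0, …, k-1} ⊆ Fin (k+1)` together with
all edges to the center, the vertex `k`. -/
def wheelEdges (k : ℕ) : Finset (Sym2 (Fin (k + 1))) :=
  ((Finset.univ : Finset (Fin k)).image fun i =>
    s((⟨i.val, by have := i.2; omega⟩ : Fin (k + 1)),
      (⟨(i.val + 1) % k, by have := i.2; exact Nat.lt_succ_of_lt (Nat.mod_lt _ (by omega))⟩ :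
        Fin (k + 1)))) ∪
  ((Finset.univ : Finset (Fin k)).image fun i =>
    s((⟨i.val, by have := i.2; omega⟩ : Fin (k + 1)), (Fin.last k)))

/-!
Let `excess a b D = a e(D) - b v(D)`, so that `m(C) ≥ b / a` means some nonempty `D ⊆ C` has
nonnegative excess; here `(a, b) = (8, 15)`. In a triangle collection `C`, a subgraph of maximal
excess is all of `C`: a triangle sharing an edge with it but not contained in it adds either
edges only (gain `a` each) or one vertex with two edges (gain `2a - b > 0`), and `T_C` is
connected. So a triangle collection with `m(C) ≥ b / a` has nonnegative excess itself, and
growing from one triangle (excess `3a - 3b`) along `T_C`, each step gaining at least one and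
adding at most one vertex, yields a subgraph on at most `3 (b - a + 1) = 24` vertices with
nonnegative excess. By the first moment method, `G_{n,p}` contains such a graph with probability
`O(p n^{a / b})`, since each copy with `v` vertices and `e ≥ b v / a` edges has probability
`p ^ e ≤ p n^{a / b} / n ^ v`.
-/

open Finset

section Support

variable [Fintype V]

@[simp]
lemma mem_support {C : Finset (Sym2 V)} {v : V} : v ∈ support C ↔ ∃ e ∈ C, v ∈ e := by
  simp [support]

lemma support_union (A B : Finset (Sym2 V)) : support (A ∪ B) = support A ∪ support B := by
  ext v
  simp only [mem_support, mem_union]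
  aesop

lemma support_triEdges (x y z : V) : support (triEdges x y z) = {x, y, z} := by
  ext v
  simp only [mem_support, triEdges, mem_insert, mem_singleton]
  aesop

lemma subset_sym2_support (C : Finset (Sym2 V)) : C ⊆ (support C).sym2 :=
  fun e he => mem_sym2_iff.2 fun _ hv => mem_support.2 ⟨e, he, hv⟩

lemma support_nonempty {C : Finset (Sym2 V)} (hC : C.Nonempty) : (support C).Nonempty := by
  obtain ⟨e, he⟩ := hC
  exact ⟨e.out.1, mem_support.2 ⟨e, he, Sym2.out_fst_mem e⟩⟩

end Support

lemma triEdges_subset_iff {A : Finset (Sym2 V)} {x y z : V} :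
    triEdges x y z ⊆ A ↔ s(x, y) ∈ A ∧ s(y, z) ∈ A ∧ s(x, z) ∈ A := by
  simp [triEdges, insert_subset_iff]

lemma card_triEdges {x y z : V} (hxy : x ≠ y) (hyz : y ≠ z) (hxz : x ≠ z) :
    #(triEdges x y z) = 3 := by
  rw [triEdges, card_insert_of_notMem, card_insert_of_notMem] <;>
    simp <;> tauto

lemma IsTriangleIn.triEdges_subset {A : Finset (Sym2 V)} {x y z : V} (h : IsTriangleIn A x y z) :
    triEdges x y z ⊆ A :=
  triEdges_subset_iff.2 h.2.2.2

lemma triEdges_rotate (x y z : V) : triEdges y z x = triEdges x y z := by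
  rw [triEdges, triEdges, @Sym2.eq_swap _ z x, @Sym2.eq_swap _ y x]
  ext g
  simp only [mem_insert, mem_singleton]
  tauto

lemma triEdges_swap (x y z : V) : triEdges x z y = triEdges x y z := by
  rw [triEdges, triEdges, @Sym2.eq_swap _ z y]
  ext g
  simp only [mem_insert, mem_singleton]
  tauto

lemma exists_triEdges_eq_of_inter_nonempty {A D t : Finset (Sym2 V)} (ht : t ∈ TriSets A)
    (hD : (t ∩ D).Nonempty) :
    ∃ x y z, IsTriangleIn A x y z ∧ t = triEdges x y z ∧ s(x, y) ∈ D := by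
  obtain ⟨x, y, z, ⟨hxy, hyz, hxz, e₁, e₂, e₃⟩, rfl⟩ := ht
  obtain ⟨g, hg⟩ := hD
  rw [mem_inter] at hg
  obtain ⟨hgt, hgD⟩ := hg
  simp only [triEdges, mem_insert, mem_singleton] at hgt
  rcases hgt with rfl | rfl | rfl
  · exact ⟨x, y, z, ⟨hxy, hyz, hxz, e₁, e₂, e₃⟩, rfl, hgD⟩
  · refine ⟨y, z, x, ⟨hyz, hxz.symm, hxy.symm, e₂, ?_, ?_⟩, (triEdges_rotate x y z).symm, hgD⟩
    · rwa [Sym2.eq_swap]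
    · rwa [Sym2.eq_swap]
  · refine ⟨x, z, y, ⟨hxz, hyz.symm, hxy, e₃, ?_, e₁⟩, (triEdges_swap x y z).symm, hgD⟩
    rwa [Sym2.eq_swap]

namespace IsTriangleCollection

variable {C D : Finset (Sym2 V)}

lemma exists_crossing_triangle (hC : IsTriangleCollection C) (hDC : D ⊆ C) (hD : D.Nonempty)
    (hne : D ≠ C) : ∃ t ∈ TriSets C, (t ∩ D).Nonempty ∧ ¬ t ⊆ D := by
  by_contra! hclosed
  obtain ⟨g, hg⟩ := hD
  obtain ⟨x, y, z, ht₀, hgt₀⟩ := hC.1 g (hDC hg)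
  have hmem₀ : triEdges x y z ∈ TriSets C := ⟨x, y, z, ht₀, rfl⟩
  have hreach : ∀ t, Relation.ReflTransGen
      (fun a b => a ∈ TriSets C ∧ b ∈ TriSets C ∧ (a ∩ b).Nonempty) (triEdges x y z) t →
      t ⊆ D := by
    intro t h
    induction h with
    | refl => exact hclosed _ hmem₀ ⟨g, mem_inter.2 ⟨hgt₀, hg⟩⟩
    | tail _ hab ih =>
      obtain ⟨-, hb, c, hc⟩ := hab
      rw [mem_inter] at hc
      exact hclosed _ hb ⟨c, mem_inter.2 ⟨hc.2, ih hc.1⟩⟩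
  refine hne (hDC.antisymm fun e he => ?_)
  obtain ⟨x', y', z', ht, het⟩ := hC.1 e he
  exact hreach _ (hC.2 _ hmem₀ _ ⟨x', y', z', ht, rfl⟩) het

end IsTriangleCollection

section Excess

variable [Fintype V]

noncomputable def excess (a b : ℕ) (D : Finset (Sym2 V)) : ℤ := a * #D - b * #(support D)

lemma excess_nonneg_iff {a b : ℕ} {D : Finset (Sym2 V)} :
    0 ≤ excess a b D ↔ b * #(support D) ≤ a * #D := by
  rw [excess, sub_nonneg]
  norm_cast

lemma support_union_triEdges {D : Finset (Sym2 V)} {x y : V} (hxy : s(x, y) ∈ D) (z : V) :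
    support (D ∪ triEdges x y z) = insert z (support D) := by
  have hx : x ∈ support D := mem_support.2 ⟨_, hxy, Sym2.mem_mk_left _ _⟩
  have hy : y ∈ support D := mem_support.2 ⟨_, hxy, Sym2.mem_mk_right _ _⟩
  ext v
  rw [support_union, support_triEdges]
  simp only [mem_union, mem_insert, mem_singleton]
  constructor
  · rintro (hv | rfl | rfl | rfl) <;> tauto
  · tauto

lemma excess_add_min_le_excess_union_triEdges (a b : ℕ) {D : Finset (Sym2 V)} {x y z : V}
    (hxy : x ≠ y) (hyz : y ≠ z) (hD : s(x, y) ∈ D) (hnsub : ¬ triEdges x y z ⊆ D) :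
    excess a b D + min (a : ℤ) (2 * a - b) ≤ excess a b (D ∪ triEdges x y z) := by
  unfold excess
  rw [support_union_triEdges hD]
  by_cases hz : z ∈ support D
  · have hcard : #D + 1 ≤ #(D ∪ triEdges x y z) :=
      card_lt_card ⟨subset_union_left, fun h => hnsub (subset_union_right.trans h)⟩
    have hcard' : (a : ℤ) * (#D + 1) ≤ a * #(D ∪ triEdges x y z) :=
      mul_le_mul_of_nonneg_left (by exact_mod_cast hcard) (Nat.cast_nonneg a)
    rw [insert_eq_of_mem hz]
    linarith [min_le_left (a : ℤ) (2 * a - b)]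
  · have hyzD : s(y, z) ∉ D := fun h => hz (mem_support.2 ⟨_, h, Sym2.mem_mk_right _ _⟩)
    have hxzD : s(x, z) ∉ D := fun h => hz (mem_support.2 ⟨_, h, Sym2.mem_mk_right _ _⟩)
    have hunion : D ∪ triEdges x y z = insert s(y, z) (insert s(x, z) D) := by
      ext g
      simp only [triEdges, mem_union, mem_insert, mem_singleton]
      constructor
      · rintro (h | rfl | rfl | rfl) <;> tauto
      · tauto
    have hne : s(y, z) ≠ s(x, z) := by
      simp [hxy.symm, hyz]
    rw [hunion, card_insert_of_notMem (by simp [hne, hyzD]), card_insert_of_notMem hxzD,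
      card_insert_of_notMem hz]
    push_cast
    linarith [min_le_right (a : ℤ) (2 * a - b)]

end Excess

namespace IsTriangleCollection

variable [Fintype V] {a b : ℕ} {C : Finset (Sym2 V)}

lemma exists_grow (hC : IsTriangleCollection C) {D : Finset (Sym2 V)} (hDC : D ⊆ C)
    (hD : D.Nonempty) (hne : D ≠ C) :
    ∃ D' ⊆ C, D ⊆ D' ∧ #(support D') ≤ #(support D) + 1 ∧
      excess a b D + min (a : ℤ) (2 * a - b) ≤ excess a b D' := by
  obtain ⟨t, ht, hmeet, hnsub⟩ := hC.exists_crossing_triangle hDC hD hne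
  obtain ⟨x, y, z, hxyz, rfl, hxyD⟩ := exists_triEdges_eq_of_inter_nonempty ht hmeet
  refine ⟨D ∪ triEdges x y z, union_subset hDC hxyz.triEdges_subset, subset_union_left, ?_,
    excess_add_min_le_excess_union_triEdges a b hxyz.1 hxyz.2.1 hxyD hnsub⟩
  rw [support_union_triEdges hxyD]
  exact card_insert_le _ _

lemma excess_nonneg (hC : IsTriangleCollection C) (hab : b < 2 * a) {D₀ : Finset (Sym2 V)}
    (hD₀C : D₀ ⊆ C) (hD₀ : D₀.Nonempty) (h : 0 ≤ excess a b D₀) : 0 ≤ excess a b C := by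
  obtain ⟨D, hD, hmax⟩ := (C.powerset.filter Finset.Nonempty).exists_max_image (excess a b)
    ⟨D₀, mem_filter.2 ⟨mem_powerset.2 hD₀C, hD₀⟩⟩
  rw [mem_filter, mem_powerset] at hD
  obtain rfl : D = C := by
    by_contra hne
    obtain ⟨D', hD'C, hDD', -, hgain⟩ := hC.exists_grow (a := a) (b := b) hD.1 hD.2 hne
    have hle := hmax D' (mem_filter.2 ⟨mem_powerset.2 hD'C, hD.2.mono hDD'⟩)
    have : (0 : ℤ) < min (a : ℤ) (2 * a - b) := lt_min (by omega) (by omega)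
    linarith
  exact h.trans (hmax D₀ (mem_filter.2 ⟨mem_powerset.2 hD₀C, hD₀⟩))

lemma exists_small_excess_nonneg (hC : IsTriangleCollection C) (hab : b < 2 * a)
    (hCne : C.Nonempty) (h : 0 ≤ excess a b C) :
    ∃ D ⊆ C, D.Nonempty ∧ #(support D) ≤ 3 * (b - a + 1) ∧ 0 ≤ excess a b D := by
  have hstep : ∀ i : ℕ, ∃ D ⊆ C, D.Nonempty ∧ #(support D) ≤ 3 + i ∧
      ((i : ℤ) + 3 * a - 3 * b ≤ excess a b D ∨ 0 ≤ excess a b D) := by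
    intro i
    induction i with
    | zero =>
      obtain ⟨g, hg⟩ := hCne
      obtain ⟨x, y, z, hxyz, -⟩ := hC.1 g hg
      have htC := hxyz.triEdges_subset
      obtain ⟨hxy, hyz, hxz, -⟩ := hxyz
      have hsupp : #(support (triEdges x y z)) = 3 := by
        rw [support_triEdges, card_insert_of_notMem (by simp [hxy, hxz]),
          card_pair hyz]
      refine ⟨_, htC, ⟨s(x, y), by simp [triEdges]⟩, hsupp.le, Or.inl ?_⟩
      simp only [excess, hsupp, card_triEdges hxy hyz hxz]
      push_cast
      linarith
    | succ i ih =>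
      obtain ⟨D, hDC, hD, hsupp, hexc⟩ := ih
      by_cases h0 : 0 ≤ excess a b D
      · exact ⟨D, hDC, hD, by omega, Or.inr h0⟩
      have hne : D ≠ C := by rintro rfl; exact h0 h
      obtain ⟨D', hD'C, hDD', hsupp', hgain⟩ := hC.exists_grow (a := a) (b := b) hDC hD hne
      have : (1 : ℤ) ≤ min (a : ℤ) (2 * a - b) := le_min (by omega) (by omega)
      exact ⟨D', hD'C, hD.mono hDD', by omega, Or.inl (by push_cast; omega)⟩
  obtain ⟨D, hDC, hD, hsupp, hexc⟩ := hstep (3 * (b - a))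
  exact ⟨D, hDC, hD, by omega, by omega⟩

end IsTriangleCollection

lemma exists_excess_nonneg_of_not_maxDensityLt [Fintype V] {a b : ℕ} (ha : 0 < a)
    {C : Finset (Sym2 V)} (h : ¬ MaxDensityLt C (b / a)) :
    ∃ D ⊆ C, D.Nonempty ∧ 0 ≤ excess a b D := by
  simp only [MaxDensityLt, not_forall, not_lt, exists_prop] at h
  obtain ⟨D, hDC, hD, hdens⟩ := h
  have hv : (0 : ℝ) < #(support D) := by exact_mod_cast (support_nonempty hD).card_pos
  rw [div_le_div_iff₀ (by exact_mod_cast ha) hv] at hdens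
  refine ⟨D, hDC, hD, excess_nonneg_iff.2 ?_⟩
  exact_mod_cast (by linarith : (b : ℝ) * #(support D) ≤ a * #D)

lemma IsTriangleCollection.exists_small_dense_of_not_maxDensityLt [Fintype V] {a b : ℕ}
    {C : Finset (Sym2 V)} (hC : IsTriangleCollection C) (hab : b < 2 * a)
    (h : ¬ MaxDensityLt C (b / a)) :
    ∃ D ⊆ C, D.Nonempty ∧ #(support D) ≤ 3 * (b - a + 1) ∧ 0 ≤ excess a b D := by
  obtain ⟨D₀, hD₀C, hD₀, h₀⟩ := exists_excess_nonneg_of_not_maxDensityLt (by omega) h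
  exact hC.exists_small_excess_nonneg hab (hD₀.mono hD₀C) (hC.excess_nonneg hab hD₀C hD₀ h₀)

section EdgeProb

variable {α : Type*} {E : Finset α} {p : ℝ}

lemma sum_weight_eq_one (E : Finset α) (p : ℝ) :
    ∑ A ∈ E.powerset, p ^ #A * (1 - p) ^ (#E - #A) = 1 := by
  simp [sum_pow_mul_eq_add_pow]

lemma sum_weight_superset [DecidableEq α] {S : Finset α} (hS : S ⊆ E) (p : ℝ) :
    ∑ A ∈ E.powerset with S ⊆ A, p ^ #A * (1 - p) ^ (#E - #A) = p ^ #S := by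
  have himage : {A ∈ E.powerset | S ⊆ A} = (E \ S).powerset.image (S ∪ ·) := by
    rw [← Icc_eq_image_powerset hS]
    ext A
    simp [and_comm]
  have hinj : Set.InjOn (S ∪ ·) (E \ S).powerset := by
    intro B hB B' hB' h
    rw [← union_sdiff_cancel_left (disjoint_of_subset_right (mem_powerset.1 hB) disjoint_sdiff),
      ← union_sdiff_cancel_left (disjoint_of_subset_right (mem_powerset.1 hB') disjoint_sdiff)]
    exact congrArg (· \ S) h
  rw [himage, sum_image hinj]
  calc ∑ B ∈ (E \ S).powerset, p ^ #(S ∪ B) * (1 - p) ^ (#E - #(S ∪ B))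
      = ∑ B ∈ (E \ S).powerset, p ^ #S * (p ^ #B * (1 - p) ^ (#(E \ S) - #B)) := by
        refine sum_congr rfl fun B hB => ?_
        have hdisj : Disjoint S B := disjoint_of_subset_right (mem_powerset.1 hB) disjoint_sdiff
        rw [card_union_of_disjoint hdisj, card_sdiff_of_subset hS, pow_add, mul_assoc,
          Nat.sub_sub]
    _ = p ^ #S := by rw [← mul_sum, sum_weight_eq_one, mul_one]

lemma edgeProb_le_one [DecidableEq α] (hp0 : 0 ≤ p) (hp1 : p ≤ 1) (P : Finset α → Prop) :
    edgeProb E p P ≤ 1 := by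
  rw [← sum_weight_eq_one E p, edgeProb]
  refine sum_le_sum fun A _ => ?_
  split_ifs
  · exact le_rfl
  · exact mul_nonneg (pow_nonneg hp0 _) (pow_nonneg (by linarith) _)

lemma one_sub_edgeProb_le_sum [DecidableEq α] (hp0 : 0 ≤ p) (hp1 : p ≤ 1)
    {P : Finset α → Prop} {𝒟 : Finset (Finset α)} (h𝒟 : ∀ S ∈ 𝒟, S ⊆ E)
    (hcover : ∀ A ⊆ E, ¬ P A → ∃ S ∈ 𝒟, S ⊆ A) :
    1 - edgeProb E p P ≤ ∑ S ∈ 𝒟, p ^ #S := by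
  classical
  set w : Finset α → ℝ := fun A => p ^ #A * (1 - p) ^ (#E - #A)
  have hw : ∀ A, 0 ≤ w A := fun A => mul_nonneg (pow_nonneg hp0 _) (pow_nonneg (by linarith) _)
  calc 1 - edgeProb E p P = ∑ A ∈ E.powerset with ¬ P A, w A := by
        rw [← sum_weight_eq_one E p, edgeProb, ← sum_filter,
          ← sum_filter_add_sum_filter_not E.powerset P]
        ring
    _ ≤ ∑ A ∈ E.powerset, ∑ S ∈ 𝒟 with S ⊆ A, w A := by
        rw [sum_filter]
        refine sum_le_sum fun A hA => ?_
        split_ifs with hPA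
        · exact sum_nonneg fun _ _ => hw A
        · obtain ⟨S, hS, hSA⟩ := hcover A (mem_powerset.1 hA) hPA
          exact single_le_sum (fun _ _ => hw A) (mem_filter.2 ⟨hS, hSA⟩)
    _ = ∑ S ∈ 𝒟, ∑ A ∈ E.powerset with S ⊆ A, w A :=
        sum_comm' fun A S => by simp only [mem_filter]; tauto
    _ = ∑ S ∈ 𝒟, p ^ #S := sum_congr rfl fun S hS => sum_weight_superset (h𝒟 S hS) p

end EdgeProb

lemma pow_le_div_pow {n a b v e : ℕ} (hn : 1 ≤ n) (hb : 0 < b) (he : e ≠ 0)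
    (hve : b * v ≤ a * e) {p : ℝ} (hp : 0 ≤ p) (hq : p * n ^ ((a : ℝ) / b) ≤ 1) :
    p ^ e ≤ p * n ^ ((a : ℝ) / b) / n ^ v := by
  have hn' : (1 : ℝ) ≤ n := by exact_mod_cast hn
  have hexp : (v : ℝ) ≤ a / b * e := by
    rw [div_mul_eq_mul_div, le_div_iff₀ (by exact_mod_cast hb)]
    exact_mod_cast (by linarith : v * b ≤ a * e)
  have hpow : (n : ℝ) ^ v ≤ ((n : ℝ) ^ ((a : ℝ) / b)) ^ e := by
    rw [← Real.rpow_natCast, ← Real.rpow_natCast, ← Real.rpow_mul (by positivity)]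
    exact Real.rpow_le_rpow_of_exponent_le hn' hexp
  rw [le_div_iff₀ (by positivity)]
  calc p ^ e * n ^ v ≤ p ^ e * ((n : ℝ) ^ ((a : ℝ) / b)) ^ e := by gcongr
    _ = (p * n ^ ((a : ℝ) / b)) ^ e := (mul_pow _ _ _).symm
    _ ≤ p * n ^ ((a : ℝ) / b) := pow_le_of_le_one (by positivity) hq he

lemma sum_inv_pow_card_le {W : Type*} [Fintype W] (K : ℕ) :
    ∑ T : Finset W with #T ≤ K, ((Fintype.card W : ℝ) ^ #T)⁻¹ ≤ K + 1 := by
  set N := Fintype.card W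
  have hmaps : ∀ T ∈ (univ.filter fun T : Finset W => #T ≤ K), #T ∈ range (K + 1) :=
    fun T hT => mem_range.2 (Nat.lt_succ_of_le (mem_filter.1 hT).2)
  rw [← sum_fiberwise_of_maps_to' hmaps fun m => ((N : ℝ) ^ m)⁻¹]
  calc ∑ m ∈ range (K + 1), ∑ T ∈ univ.filter (fun T : Finset W => #T ≤ K) with #T = m,
        ((N : ℝ) ^ m)⁻¹
      ≤ ∑ m ∈ range (K + 1), (1 : ℝ) := by
        refine sum_le_sum fun m _ => ?_
        have hcard : #{T ∈ univ.filter (fun T : Finset W => #T ≤ K) | #T = m} ≤ N ^ m :=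
          calc _ ≤ #(powersetCard m (univ : Finset W)) :=
                card_le_card fun T hT => mem_powersetCard_univ.2 (mem_filter.1 hT).2
            _ ≤ N ^ m := by rw [card_powersetCard]; exact Nat.choose_le_pow _ _
        rw [sum_const, nsmul_eq_mul]
        exact mul_inv_le_one_of_le₀ (by exact_mod_cast hcard) (by positivity)
    _ = K + 1 := by simp

section Counting

variable [Fintype V]

lemma card_filter_support_eq_le (𝒟 : Finset (Finset (Sym2 V))) (T : Finset V) :
    #{S ∈ 𝒟 | support S = T} ≤ 2 ^ (#T + 1).choose 2 := by
  calc #{S ∈ 𝒟 | support S = T} ≤ #T.sym2.powerset := by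
        refine card_le_card fun S hS => ?_
        rw [mem_filter] at hS
        exact mem_powerset.2 (hS.2 ▸ subset_sym2_support S)
    _ = 2 ^ (#T + 1).choose 2 := by rw [card_powerset, card_sym2]

lemma sum_inv_pow_card_support_le {K : ℕ} (𝒟 : Finset (Finset (Sym2 V)))
    (h𝒟 : ∀ S ∈ 𝒟, #(support S) ≤ K) :
    ∑ S ∈ 𝒟, ((Fintype.card V : ℝ) ^ #(support S))⁻¹ ≤ 2 ^ (K + 1).choose 2 * (K + 1) := by
  set N := Fintype.card V
  have hmaps : ∀ S ∈ 𝒟, support S ∈ univ.filter fun T : Finset V => #T ≤ K :=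
    fun S hS => mem_filter.2 ⟨mem_univ _, h𝒟 S hS⟩
  rw [← sum_fiberwise_of_maps_to' hmaps fun T => ((N : ℝ) ^ #T)⁻¹]
  calc ∑ T ∈ univ.filter (fun T : Finset V => #T ≤ K), ∑ S ∈ 𝒟 with support S = T,
        ((N : ℝ) ^ #T)⁻¹
      ≤ ∑ T ∈ univ.filter (fun T : Finset V => #T ≤ K),
          2 ^ (K + 1).choose 2 * ((N : ℝ) ^ #T)⁻¹ := by
        refine sum_le_sum fun T hT => ?_
        have hTK : #T ≤ K := (mem_filter.1 hT).2
        rw [sum_const, nsmul_eq_mul]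
        gcongr
        exact_mod_cast (card_filter_support_eq_le 𝒟 T).trans
          (Nat.pow_le_pow_right two_pos (Nat.choose_le_choose 2 (by omega)))
    _ ≤ 2 ^ (K + 1).choose 2 * (K + 1) := by
        rw [← mul_sum]
        gcongr
        exact sum_inv_pow_card_le K

end Counting

theorem one_sub_edgeProb_triangleCollections_le {n a b : ℕ} (hn : 1 ≤ n) (hb : 0 < b)
    (hab : b < 2 * a) {p : ℝ} (hp0 : 0 ≤ p) (hp1 : p ≤ 1) (hq : p * n ^ ((a : ℝ) / b) ≤ 1) :
    1 - edgeProb (completeEdges n) p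
        (fun A => ∀ C ⊆ A, IsTriangleCollection C → MaxDensityLt C (b / a)) ≤
      ((2 ^ (3 * (b - a + 1) + 1).choose 2 * (3 * (b - a + 1) + 1) : ℕ) : ℝ) *
        (p * n ^ ((a : ℝ) / b)) := by
  set K := 3 * (b - a + 1)
  set 𝒟 := (completeEdges n).powerset.filter fun S =>
    S.Nonempty ∧ #(support S) ≤ K ∧ 0 ≤ excess a b S
  have hcover : ∀ A ⊆ completeEdges n,
      ¬ (∀ C ⊆ A, IsTriangleCollection C → MaxDensityLt C (b / a)) → ∃ S ∈ 𝒟, S ⊆ A := by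
    intro A hA hfail
    push Not at hfail
    obtain ⟨C, hCA, hC, hdens⟩ := hfail
    obtain ⟨D, hDC, hD, hDK, hDexc⟩ := hC.exists_small_dense_of_not_maxDensityLt hab hdens
    exact ⟨D, mem_filter.2 ⟨mem_powerset.2 ((hDC.trans hCA).trans hA), hD, hDK, hDexc⟩,
      hDC.trans hCA⟩
  calc _ ≤ ∑ S ∈ 𝒟, p ^ #S :=
        one_sub_edgeProb_le_sum hp0 hp1 (fun S hS => mem_powerset.1 (mem_filter.1 hS).1) hcover
    _ ≤ ∑ S ∈ 𝒟, p * n ^ ((a : ℝ) / b) / n ^ #(support S) := by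
        refine sum_le_sum fun S hS => ?_
        obtain ⟨-, hS, -, hSexc⟩ := mem_filter.1 hS
        exact pow_le_div_pow hn hb (card_ne_zero.2 hS) (excess_nonneg_iff.1 hSexc) hp0 hq
    _ = p * n ^ ((a : ℝ) / b) * ∑ S ∈ 𝒟, ((Fintype.card (Fin n) : ℝ) ^ #(support S))⁻¹ := by
        simp [mul_sum, div_eq_mul_inv]
    _ ≤ _ := by
        rw [mul_comm]
        gcongr
        exact_mod_cast sum_inv_pow_card_support_le 𝒟 fun S hS => (mem_filter.1 hS).2.2.1

/-- If `p ≪ n^{-8/15}`, then a.a.s. every triangle collection `C` in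
`G ∼ G_{n,p}` satisfies `m(C) < 15/8`. -/
theorem collections_sparse (p : ℕ → ℝ) (hp0 : ∀ n, 0 ≤ p n) (hp1 : ∀ n, p n ≤ 1)
    (h : Filter.Tendsto (fun n : ℕ => p n * (n : ℝ) ^ (8 / 15 : ℝ))
      Filter.atTop (nhds 0)) :
    Filter.Tendsto (fun n : ℕ =>
        edgeProb (completeEdges n) (p n)
          (fun A => ∀ C ⊆ A, IsTriangleCollection C → MaxDensityLt C (15 / 8)))
      Filter.atTop (nhds 1) := by
  set c : ℝ := ((2 ^ (3 * (15 - 8 + 1) + 1).choose 2 * (3 * (15 - 8 + 1) + 1) : ℕ) : ℝ)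
  have hlower : ∀ᶠ n : ℕ in Filter.atTop, 1 - c * (p n * (n : ℝ) ^ (8 / 15 : ℝ)) ≤
      edgeProb (completeEdges n) (p n)
        (fun A => ∀ C ⊆ A, IsTriangleCollection C → MaxDensityLt C (15 / 8)) := by
    filter_upwards [Filter.eventually_ge_atTop 1, h.eventually (ge_mem_nhds one_pos)]
      with n hn hq
    have := one_sub_edgeProb_triangleCollections_le (a := 8) (b := 15) hn (by norm_num)
      (by norm_num) (hp0 n) (hp1 n) (by exact_mod_cast hq)
    simp only [Nat.cast_ofNat] at this
    linarith
  refine tendsto_of_tendsto_of_tendsto_of_le_of_le' ?_ tendsto_const_nhds hlower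
    (Filter.Eventually.of_forall fun n => edgeProb_le_one (hp0 n) (hp1 n) _)
  simpa using (h.const_mul c).const_sub 1

end TournamentGame
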